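/- Let T be a tree, s a vertex of T of type A, and t a neighbour of s in T. Let T_s and T_t denote the connected components of T − st containing s and t respectively. Then t is of type B in T, and moreover μ(T_s − s) = μ(T_s), μ(T_t − t) = μ(T_t) − 1, μ(T) = μ(T_s) + μ(T_t), and m(T) = m(T_s) m(T_t) + m(T_s − s) m(T_t − t). -/

import Mathlib

namespace PaperMM

open SimpleGraph

/-- `M` is a matching of `G`: a set of edges of `G` that are pairwise disjoint. -/
def IsMatchingSet {V : Type} (G : SimpleGraph V) (M : Set (Sym2 V)) : Prop :=
  M ⊆ G.edgeSet ∧ M.Pairwise fun e f => ∀ v : V, ¬(v ∈ e ∧ v ∈ f)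

/-- The matching number `μ(G)`: the maximum cardinality of a matching of `G`. -/
noncomputable def matchNum {V : Type} (G : SimpleGraph V) : ℕ :=
  sSup {n | ∃ M : Set (Sym2 V), IsMatchingSet G M ∧ M.ncard = n}

/-- The set of maximum matchings of `G`. -/
def MaximumMatchings {V : Type} (G : SimpleGraph V) : Set (Set (Sym2 V)) :=
  {M | IsMatchingSet G M ∧ M.ncard = matchNum G}

/-- `m(G)`: the number of maximum matchings of `G`. -/
noncomputable def mm {V : Type} (G : SimpleGraph V) : ℕ := (MaximumMatchings G).ncard

/-- The matching `M` covers the vertex `v`. -/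
def Covers {V : Type} (M : Set (Sym2 V)) (v : V) : Prop := ∃ e ∈ M, v ∈ e

/-- `v` is of type A in `G`: some maximum matching of `G` does not cover `v`. -/
def TypeA {V : Type} (G : SimpleGraph V) (v : V) : Prop :=
  ∃ M ∈ MaximumMatchings G, ¬ Covers M v

/-- `v` is of type B in `G`: every maximum matching of `G` covers `v`. -/
def TypeB {V : Type} (G : SimpleGraph V) (v : V) : Prop := ¬ TypeA G v

/-- `G` has a perfect matching. -/
def HasPerfectMatching {V : Type} (G : SimpleGraph V) : Prop :=
  ∃ M : Set (Sym2 V), IsMatchingSet G M ∧ ∀ v, Covers M v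

/-- The degree of `v` in `G`. -/
noncomputable def degS {V : Type} (G : SimpleGraph V) (v : V) : ℕ := (G.neighborSet v).ncard

/-- `G` is an optimal tree: a tree maximising `m` among all trees of the same order. -/
def OptimalTree {V : Type} [Fintype V] (G : SimpleGraph V) : Prop :=
  G.IsTree ∧ ∀ H : SimpleGraph (Fin (Fintype.card V)), H.IsTree → mm H ≤ mm G

/-- The vertex set of the connected component of `s` in `G - st`. -/
def sideSet {V : Type} (G : SimpleGraph V) (s t : V) : Set V :=
  {v | (G.deleteEdges {s(s, t)}).Reachable s v}

/-- The connected component of `s` in `G - st`, as a graph. -/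
def sideGraph {V : Type} (G : SimpleGraph V) (s t : V) :
    SimpleGraph (sideSet G s t) :=
  (G.deleteEdges {s(s, t)}).induce (sideSet G s t)

theorem mem_sideSet_self {V : Type} (G : SimpleGraph V) (s t : V) : s ∈ sideSet G s t :=
  SimpleGraph.Reachable.refl s

/-- The root of the component of `s` in `G - st`, i.e. `s` itself. -/
def sideRoot {V : Type} (G : SimpleGraph V) (s t : V) : sideSet G s t :=
  ⟨s, mem_sideSet_self G s t⟩

/-- `μ(T_s)` where `T_s` is the component of `s` in `G - st`. -/
noncomputable def sideMu {V : Type} (G : SimpleGraph V) (s t : V) : ℕ := matchNum (sideGraph G s t)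

/-- `m(T_s)` where `T_s` is the component of `s` in `G - st`. -/
noncomputable def sideM {V : Type} (G : SimpleGraph V) (s t : V) : ℕ := mm (sideGraph G s t)

/-- `μ(T_s − s)` where `T_s` is the component of `s` in `G - st`. -/
noncomputable def sideMuDel {V : Type} (G : SimpleGraph V) (s t : V) : ℕ :=
  matchNum ((G.deleteEdges {s(s, t)}).induce (sideSet G s t \ {s}))

/-- `m(T_s − s)` where `T_s` is the component of `s` in `G - st`. -/
noncomputable def sideMDel {V : Type} (G : SimpleGraph V) (s t : V) : ℕ :=
  mm ((G.deleteEdges {s(s, t)}).induce (sideSet G s t \ {s}))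

/-- A rooted graph: a vertex type, a graph on it, and a root vertex. -/
structure RGraph : Type 1 where
  V : Type
  G : SimpleGraph V
  root : V

/-- `m(T)` for a rooted graph. -/
noncomputable def RGraph.m (T : RGraph) : ℕ := mm T.G

/-- `m_0(T) = m(T − r)` for a rooted graph with root `r`. -/
noncomputable def RGraph.m0 (T : RGraph) : ℕ := mm (T.G.induce {v | v ≠ T.root})

/-- `m_1(T)`: the number of maximum matchings of `G` covering `r`. -/
noncomputable def mmCover {V : Type} (G : SimpleGraph V) (r : V) : ℕ :=
  {M | M ∈ MaximumMatchings G ∧ Covers M r}.ncard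

/-- The order (number of vertices) of a rooted graph. -/
noncomputable def RGraph.order (T : RGraph) : ℕ := Nat.card T.V

/-- Isomorphism of rooted graphs: a graph isomorphism mapping root to root. -/
def RGraph.RIso (T T' : RGraph) : Prop :=
  ∃ φ : T.G ≃g T'.G, φ T.root = T'.root

/-- The one-vertex rooted tree `L`. -/
def rL : RGraph := ⟨PUnit, ⊥, PUnit.unit⟩

/-- The fork `F`: the root `0` is adjacent to `1`, which is adjacent to the leaves `2`, `3`. -/
def rF : RGraph :=
  ⟨Fin 4, SimpleGraph.fromRel (fun a b => (a = 0 ∧ b = 1) ∨ (a = 1 ∧ b = 2) ∨ (a = 1 ∧ b = 3)), 0⟩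

/-- The rooted tree `B₂*`: a single edge rooted at one endpoint. -/
def rB2 : RGraph := ⟨Fin 2, SimpleGraph.fromRel (fun a b => a = 0 ∧ b = 1), 0⟩

/-- The rooted tree `A₃*`: a path on three vertices rooted at an endpoint. -/
def rA3 : RGraph :=
  ⟨Fin 3, SimpleGraph.fromRel (fun a b => (a = 0 ∧ b = 1) ∨ (a = 1 ∧ b = 2)), 0⟩

/-- The `k`-claw: the star `K_{1,k}` rooted at its center. -/
def claw (k : ℕ) : RGraph :=
  ⟨Fin (k + 1), SimpleGraph.fromRel (fun a b => a = 0 ∧ b ≠ 0), 0⟩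

/-- The chain construction `C`: seven new vertices are added to the rooted tree `T`;
`Sum.inr 0` is the new root `s`, `Sum.inr 1` is the vertex `b` adjacent to `s`, to the new
leaf `Sum.inr 2`, to the root `Sum.inr 3` of a new fork (with center `Sum.inr 4` and leaves
`Sum.inr 5`, `Sum.inr 6`), and to the old root of `T`. -/
def consC (T : RGraph) : RGraph where
  V := T.V ⊕ Fin 7
  G := SimpleGraph.fromRel (fun a b =>
    (∃ x y, T.G.Adj x y ∧ a = Sum.inl x ∧ b = Sum.inl y) ∨
    (a = Sum.inr 0 ∧ b = Sum.inr 1) ∨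
    (a = Sum.inr 1 ∧ b = Sum.inr 2) ∨
    (a = Sum.inr 1 ∧ b = Sum.inr 3) ∨
    (a = Sum.inr 3 ∧ b = Sum.inr 4) ∨
    (a = Sum.inr 4 ∧ b = Sum.inr 5) ∨
    (a = Sum.inr 4 ∧ b = Sum.inr 6) ∨
    (a = Sum.inr 1 ∧ b = Sum.inl T.root))
  root := Sum.inr 0

/-- `hang T S`: the disjoint union of rooted graphs `T` and `S` together with an edge
joining their roots; the root of the result is the root of `T`. -/
def hang (T S : RGraph) : RGraph where
  V := T.V ⊕ S.V
  G := SimpleGraph.fromRel (fun a b =>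
    (∃ x y, T.G.Adj x y ∧ a = Sum.inl x ∧ b = Sum.inl y) ∨
    (∃ x y, S.G.Adj x y ∧ a = Sum.inr x ∧ b = Sum.inr y) ∨
    (a = Sum.inl T.root ∧ b = Sum.inr S.root))
  root := Sum.inl T.root

/-- The rooted subtree of `G` cut off by the edge `st` on the side of `s`, rooted at `s`. -/
def sideRG {V : Type} (G : SimpleGraph V) (s t : V) : RGraph :=
  ⟨sideSet G s t, sideGraph G s t, sideRoot G s t⟩

/-- `y` lies on the path from `x` to the root of `T`. -/
def OnRootPath (T : RGraph) (x y : T.V) : Prop := ∀ p : T.G.Walk x T.root, y ∈ p.support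

/-- The rooted graph `T` contains a `k`-claw: either `T` itself is a `k`-claw, or
there is an edge `xy` of `T` with `y` on the path from `x` to the root such that
the component of `x` in `T − xy`, rooted at `x`, is a `k`-claw. -/
def ContainsClaw (T : RGraph) (k : ℕ) : Prop :=
  T.RIso (claw k) ∨
  ∃ x y : T.V, T.G.Adj x y ∧ OnRootPath T x y ∧ (sideRG T.G x y).RIso (claw k)

/-- The vertex set of the branch of the rooted graph `(G, r)` containing the
neighbour `x` of `r`: all vertices reachable from `x` avoiding `r`. -/
def branchSet {V : Type} (G : SimpleGraph V) (r x : V) : Set V :=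
  {v | ∃ p : G.Walk x v, r ∉ p.support}

/-- `m` of the branch of `(G, r)` at the neighbour `x`. -/
noncomputable def branchM {V : Type} (G : SimpleGraph V) (r x : V) : ℕ :=
  mm (G.induce (branchSet G r x))

/-- `m_0` of the branch of `(G, r)` at the neighbour `x` (the branch is rooted at `x`). -/
noncomputable def branchM0 {V : Type} (G : SimpleGraph V) (r x : V) : ℕ :=
  mm (G.induce (branchSet G r x \ {x}))

/-- The branch of `(G, r)` at the neighbour `x`, rooted at `x`, is of type A. -/
def BranchTypeA {V : Type} (G : SimpleGraph V) (r x : V) : Prop :=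
  ∃ h : x ∈ branchSet G r x, TypeA (G.induce (branchSet G r x)) ⟨x, h⟩

/-- The branch of `(G, r)` at the neighbour `x`, rooted at `x`, is of type B. -/
def BranchTypeB {V : Type} (G : SimpleGraph V) (r x : V) : Prop :=
  ∃ h : x ∈ branchSet G r x, TypeB (G.induce (branchSet G r x)) ⟨x, h⟩

/-- The bipartition condition for rooted trees: a one-vertex rooted tree fulfils it,
and a rooted tree fulfils it if all of its branches (each rooted at the corresponding
neighbour of the root) fulfil it and have type different from the type of the root. -/
inductive BipCond : {V : Type} → SimpleGraph V → V → Prop where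
  | single {V : Type} (G : SimpleGraph V) (r : V) (h : ∀ v : V, v = r) : BipCond G r
  | node {V : Type} (G : SimpleGraph V) (r : V)
      (hrec : ∀ (x : V), G.Adj r x → ∀ (hm : x ∈ branchSet G r x),
        BipCond (G.induce (branchSet G r x)) ⟨x, hm⟩)
      (htype : ∀ (x : V), G.Adj r x → ∀ (hm : x ∈ branchSet G r x),
        ¬ (TypeA G r ↔ TypeA (G.induce (branchSet G r x)) ⟨x, hm⟩)) :
      BipCond G r

/-- The integer sequence `G_j` with `G_0 = 0`, `G_1 = 1`, `G_{j+2} = 11 G_{j+1} − 9 G_j`. -/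
def Gseq : ℕ → ℤ
  | 0 => 0
  | 1 => 1
  | (n + 2) => 11 * Gseq (n + 1) - 9 * Gseq n

/-- Attach one new pendant vertex to the vertex `w` of `H`. -/
def addLeaf {W : Type} (H : SimpleGraph W) (w : W) : SimpleGraph (W ⊕ Unit) :=
  SimpleGraph.fromRel (fun a b =>
    (∃ x y, H.Adj x y ∧ a = Sum.inl x ∧ b = Sum.inl y) ∨
    (a = Sum.inl w ∧ b = Sum.inr ()))

/-- The 6-vertex spider with legs of lengths 1, 1 and 3 attached to the center `0`. -/
def spider6 : SimpleGraph (Fin 6) :=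
  SimpleGraph.fromRel (fun a b =>
    (a = 0 ∧ b = 1) ∨ (a = 0 ∧ b = 2) ∨ (a = 0 ∧ b = 3) ∨ (a = 3 ∧ b = 4) ∨ (a = 4 ∧ b = 5))

/-! Cutting the edge `st` splits `T` into `T_s` and `T_t`. A matching of `T` either avoids `st`,
and is then a matching of `T_s` together with one of `T_t`, or it is `st` together with matchings
of `T_s − s` and `T_t − t`. Writing `a, a', b, b'` for `μ(T_s), μ(T_s − s), μ(T_t), μ(T_t − t)`,
this gives `a + b ≤ μ(T)` and `a' + b' + 1 ≤ μ(T)`, while a maximum matching missing `s` shows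
`μ(T) ≤ a' + b`. With `a' ≤ a` and `b ≤ b' + 1` this forces `a' = a`, `b = b' + 1` and
`μ(T) = a + b = a' + b' + 1`: both kinds of matchings occur among the maximum ones, which gives the
formula for `m(T)`, and a maximum matching missing `t` would have at most `a + b' < μ(T)` edges. -/

section MaxCard

variable {α : Type*} [Finite α] {P : Set (Set α)}

lemma bddAbove_ncard_image (P : Set (Set α)) : BddAbove (Set.ncard '' P) :=
  ⟨Nat.card α, by rintro _ ⟨M, -, rfl⟩; exact Set.ncard_le_card M⟩

lemma ncard_le_sSup_ncard_image {M : Set α} (hM : M ∈ P) : M.ncard ≤ sSup (Set.ncard '' P) :=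
  le_csSup (bddAbove_ncard_image P) ⟨M, hM, rfl⟩

lemma exists_ncard_eq_sSup_ncard_image (hP : P.Nonempty) :
    ∃ M ∈ P, M.ncard = sSup (Set.ncard '' P) :=
  Nat.sSup_mem (hP.image _) (bddAbove_ncard_image P)

end MaxCard

section Matchings

variable {V : Type} {G H : SimpleGraph V} {M N : Set (Sym2 V)}

lemma isMatchingSet_empty (G : SimpleGraph V) : IsMatchingSet G ∅ :=
  ⟨Set.empty_subset _, Set.pairwise_empty _⟩

lemma IsMatchingSet.subset (hM : IsMatchingSet G M) (h : N ⊆ M) : IsMatchingSet G N :=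
  ⟨h.trans hM.1, hM.2.mono h⟩

lemma IsMatchingSet.mono (hM : IsMatchingSet G M) (h : G ≤ H) : IsMatchingSet H M :=
  ⟨hM.1.trans (edgeSet_mono h), hM.2⟩

lemma IsMatchingSet.union (hM : IsMatchingSet G M) (hN : IsMatchingSet G N)
    (h : ∀ e ∈ M, ∀ f ∈ N, ∀ v, ¬(v ∈ e ∧ v ∈ f)) : IsMatchingSet G (M ∪ N) :=
  ⟨Set.union_subset hM.1 hN.1, Set.pairwise_union.2 ⟨hM.2, hN.2, fun e he f hf _ =>
    ⟨h e he f hf, fun v hv => h e he f hf v hv.symm⟩⟩⟩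

lemma IsMatchingSet.ncard_le_matchNum [Finite V] (hM : IsMatchingSet G M) :
    M.ncard ≤ matchNum G :=
  ncard_le_sSup_ncard_image hM

lemma IsMatchingSet.ncard_le_ncard_add_one [Finite V] (hM : IsMatchingSet G M) (v : V) :
    M.ncard ≤ {e ∈ M | v ∉ e}.ncard + 1 := by
  have hcov : {e ∈ M | v ∈ e}.ncard ≤ 1 := (Set.ncard_le_one).2
    fun e ⟨he, hve⟩ f ⟨hf, hvf⟩ => by_contra fun hne => hM.2 he hf hne v ⟨hve, hvf⟩
  calc M.ncard ≤ ({e ∈ M | v ∉ e} ∪ {e ∈ M | v ∈ e}).ncard :=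
        Set.ncard_le_ncard fun e he => (em (v ∈ e)).elim (fun h => .inr ⟨he, h⟩)
          (fun h => .inl ⟨he, h⟩)
    _ ≤ _ := (Set.ncard_union_le _ _).trans (by omega)

end Matchings

section MatchingsOn

variable {V : Type} {G H : SimpleGraph V} {S T : Set V} {M : Set (Sym2 V)}

/-- The matchings of `G[S]`, kept as edge sets of `G`. -/
def matchingsOn (G : SimpleGraph V) (S : Set V) : Set (Set (Sym2 V)) :=
  {M | IsMatchingSet G M ∧ ∀ e ∈ M, ∀ v ∈ e, v ∈ S}

noncomputable def matchNumOn (G : SimpleGraph V) (S : Set V) : ℕ :=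
  sSup (Set.ncard '' matchingsOn G S)

def maxMatchingsOn (G : SimpleGraph V) (S : Set V) : Set (Set (Sym2 V)) :=
  {M | M ∈ matchingsOn G S ∧ M.ncard = matchNumOn G S}

lemma mem_matchingsOn_univ : M ∈ matchingsOn G Set.univ ↔ IsMatchingSet G M :=
  ⟨And.left, fun hM => ⟨hM, fun _ _ _ _ => Set.mem_univ _⟩⟩

lemma matchingsOn_mono (h : S ⊆ T) : matchingsOn G S ⊆ matchingsOn G T :=
  fun _ hM => ⟨hM.1, fun e he v hv => h (hM.2 e he v hv)⟩

variable [Finite V]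

lemma ncard_le_matchNumOn (hM : M ∈ matchingsOn G S) : M.ncard ≤ matchNumOn G S :=
  ncard_le_sSup_ncard_image hM

lemma exists_mem_maxMatchingsOn (G : SimpleGraph V) (S : Set V) :
    ∃ M, M ∈ maxMatchingsOn G S :=
  exists_ncard_eq_sSup_ncard_image ⟨∅, isMatchingSet_empty G, by simp⟩

lemma matchNumOn_mono (h : S ⊆ T) : matchNumOn G S ≤ matchNumOn G T := by
  obtain ⟨M, hM, hcard⟩ := exists_mem_maxMatchingsOn G S
  exact hcard ▸ ncard_le_matchNumOn (matchingsOn_mono h hM)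

lemma matchNumOn_le_matchNumOn_sdiff_singleton_add_one (G : SimpleGraph V) (S : Set V) (v : V) :
    matchNumOn G S ≤ matchNumOn G (S \ {v}) + 1 := by
  obtain ⟨M, hM, hcard⟩ := exists_mem_maxMatchingsOn G S
  have hrest : {e ∈ M | v ∉ e} ∈ matchingsOn G (S \ {v}) :=
    ⟨hM.1.subset (Set.sep_subset _ _), fun e he u hu =>
      ⟨hM.2 e he.1 u hu, fun huv => he.2 (huv ▸ hu)⟩⟩
  rw [← hcard]
  exact (hM.1.ncard_le_ncard_add_one v).trans (by grw [ncard_le_matchNumOn hrest])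

lemma matchNumOn_le_matchNum (h : H ≤ G) (S : Set V) : matchNumOn H S ≤ matchNum G := by
  obtain ⟨M, hM, hcard⟩ := exists_mem_maxMatchingsOn H S
  exact hcard ▸ (hM.1.mono h).ncard_le_matchNum

end MatchingsOn

section Embedding

variable {V W : Type} {G : SimpleGraph V} {H : SimpleGraph W}

lemma isMatchingSet_image_iff (φ : H ↪g G) {M : Set (Sym2 W)} :
    IsMatchingSet G (Sym2.map φ '' M) ↔ IsMatchingSet H M := by
  have hdisj : ∀ e f : Sym2 W,
      (∀ v, ¬(v ∈ e.map φ ∧ v ∈ f.map φ)) ↔ ∀ w, ¬(w ∈ e ∧ w ∈ f) := by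
    refine fun e f => ⟨fun h w hw => h (φ w)
      ⟨Sym2.mem_map.2 ⟨w, hw.1, rfl⟩, Sym2.mem_map.2 ⟨w, hw.2, rfl⟩⟩, fun h v ⟨hve, hvf⟩ => ?_⟩
    obtain ⟨a, ha, rfl⟩ := Sym2.mem_map.1 hve
    obtain ⟨b, hb, hba⟩ := Sym2.mem_map.1 hvf
    exact h a ⟨ha, φ.injective hba ▸ hb⟩
  simp only [IsMatchingSet, Set.image_subset_iff, φ.preimage_edgeSet,
    (Sym2.map.injective φ.injective).injOn.pairwise_image]
  exact and_congr_right fun _ => ⟨fun h => h.mono' fun e f => (hdisj e f).1,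
    fun h => h.mono' fun e f => (hdisj e f).2⟩

lemma image_setOf_isMatchingSet (φ : H ↪g G) :
    Set.image (Sym2.map φ) '' {M | IsMatchingSet H M} = matchingsOn G (Set.range φ) := by
  ext N
  constructor
  · rintro ⟨M, hM, rfl⟩
    refine ⟨(isMatchingSet_image_iff φ).2 hM, ?_⟩
    rintro _ ⟨e, -, rfl⟩ v hv
    obtain ⟨a, -, rfl⟩ := Sym2.mem_map.1 hv
    exact ⟨a, rfl⟩
  · rintro ⟨hN, hsupp⟩
    have hrange : N ⊆ Set.range (Sym2.map φ) := by
      intro e he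
      induction e using Sym2.ind with
      | _ x y =>
        obtain ⟨a, rfl⟩ := hsupp _ he x (Sym2.mem_mk_left x y)
        obtain ⟨b, rfl⟩ := hsupp _ he y (Sym2.mem_mk_right _ y)
        exact ⟨s(a, b), rfl⟩
    refine ⟨Sym2.map φ ⁻¹' N, ?_, Set.image_preimage_eq_of_subset hrange⟩
    exact (isMatchingSet_image_iff φ).1 (by rwa [Set.image_preimage_eq_of_subset hrange])

lemma matchNum_eq_matchNumOn_range (φ : H ↪g G) : matchNum H = matchNumOn G (Set.range φ) := by
  rw [matchNumOn, ← image_setOf_isMatchingSet φ, Set.image_image]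
  simp_rw [Set.ncard_image_of_injective _ (Sym2.map.injective φ.injective)]
  rfl

lemma image_maximumMatchings (φ : H ↪g G) :
    Set.image (Sym2.map φ) '' MaximumMatchings H = maxMatchingsOn G (Set.range φ) := by
  have hcard := fun M : Set (Sym2 W) =>
    Set.ncard_image_of_injective M (Sym2.map.injective φ.injective)
  ext N
  constructor
  · rintro ⟨M, ⟨hM, hMcard⟩, rfl⟩
    refine ⟨image_setOf_isMatchingSet φ ▸ ⟨M, hM, rfl⟩, ?_⟩
    rw [hcard, hMcard, matchNum_eq_matchNumOn_range φ]
  · rintro ⟨hN, hNcard⟩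
    obtain ⟨M, hM, rfl⟩ := (image_setOf_isMatchingSet φ).symm ▸ hN
    refine ⟨M, ⟨hM, ?_⟩, rfl⟩
    rw [← hcard, hNcard, matchNum_eq_matchNumOn_range φ]

lemma mm_eq_ncard_maxMatchingsOn_range (φ : H ↪g G) :
    mm H = (maxMatchingsOn G (Set.range φ)).ncard := by
  rw [mm, ← image_maximumMatchings φ, Set.ncard_image_of_injective _
    (Set.image_injective.2 (Sym2.map.injective φ.injective))]

lemma matchNum_induce (G : SimpleGraph V) (S : Set V) : matchNum (G.induce S) = matchNumOn G S :=
  (matchNum_eq_matchNumOn_range (Embedding.induce S)).trans (congrArg _ Subtype.range_coe)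

lemma mm_induce (G : SimpleGraph V) (S : Set V) : mm (G.induce S) = (maxMatchingsOn G S).ncard :=
  (mm_eq_ncard_maxMatchingsOn_range (Embedding.induce S)).trans
    (congrArg (fun S => (maxMatchingsOn G S).ncard) Subtype.range_coe)

end Embedding

section DisjointUnion

variable {V : Type} {G : SimpleGraph V} {X Y : Set V} {M N₁ N₂ : Set (Sym2 V)}

lemma sep_union_eq_left (hXY : Disjoint X Y) (h₁ : N₁ ∈ matchingsOn G X)
    (h₂ : N₂ ∈ matchingsOn G Y) : {e ∈ N₁ ∪ N₂ | ∀ v ∈ e, v ∈ X} = N₁ := by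
  ext e
  refine ⟨fun ⟨he, hX⟩ => he.resolve_right fun he₂ => ?_,
    fun he => ⟨.inl he, h₁.2 e he⟩⟩
  exact Set.disjoint_left.1 hXY (hX _ e.out_fst_mem) (h₂.2 e he₂ _ e.out_fst_mem)

lemma sep_union_eq_right (hXY : Disjoint X Y) (h₁ : N₁ ∈ matchingsOn G X)
    (h₂ : N₂ ∈ matchingsOn G Y) : {e ∈ N₁ ∪ N₂ | ∀ v ∈ e, v ∈ Y} = N₂ := by
  rw [Set.union_comm]
  exact sep_union_eq_left hXY.symm h₂ h₁

lemma union_mem_matchingsOn_union (hXY : Disjoint X Y) (h₁ : N₁ ∈ matchingsOn G X)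
    (h₂ : N₂ ∈ matchingsOn G Y) : N₁ ∪ N₂ ∈ matchingsOn G (X ∪ Y) :=
  ⟨h₁.1.union h₂.1 fun e he f hf v hv =>
      Set.disjoint_left.1 hXY (h₁.2 e he v hv.1) (h₂.2 f hf v hv.2),
    fun e he v hv =>
      he.elim (fun he => .inl (h₁.2 e he v hv)) (fun he => .inr (h₂.2 e he v hv))⟩

lemma exists_eq_union_of_mem_matchingsOn_union (hsep : ∀ u v, G.Adj u v → u ∈ X → v ∉ Y)
    (hM : M ∈ matchingsOn G (X ∪ Y)) :
    ∃ N₁ ∈ matchingsOn G X, ∃ N₂ ∈ matchingsOn G Y, M = N₁ ∪ N₂ := by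
  have hside : ∀ e ∈ M, (∀ v ∈ e, v ∈ X) ∨ ∀ v ∈ e, v ∈ Y := by
    intro e he
    induction e using Sym2.ind with
    | _ u v =>
      have hadj : G.Adj u v := hM.1.1 he
      have hu := hM.2 _ he u (Sym2.mem_mk_left u v)
      have hv := hM.2 _ he v (Sym2.mem_mk_right u v)
      have huv := hsep u v hadj
      have hvu := hsep v u hadj.symm
      simp only [Sym2.mem_iff, forall_eq_or_imp, forall_eq, Set.mem_union] at hu hv ⊢
      tauto
  refine ⟨{e ∈ M | ∀ v ∈ e, v ∈ X},
    ⟨hM.1.subset (Set.sep_subset _ _), fun e he => he.2⟩,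
    {e ∈ M | ¬∀ v ∈ e, v ∈ X},
    ⟨hM.1.subset (Set.sep_subset _ _), fun e he => (hside e he.1).resolve_left he.2⟩, ?_⟩
  ext e
  simp only [Set.mem_union, Set.mem_sep_iff]
  tauto

variable [Finite V]

lemma ncard_union_of_mem_matchingsOn (hXY : Disjoint X Y) (h₁ : N₁ ∈ matchingsOn G X)
    (h₂ : N₂ ∈ matchingsOn G Y) : (N₁ ∪ N₂).ncard = N₁.ncard + N₂.ncard :=
  Set.ncard_union_eq <| Set.disjoint_left.2 fun e he₁ he₂ =>
    Set.disjoint_left.1 hXY (h₁.2 e he₁ _ e.out_fst_mem) (h₂.2 e he₂ _ e.out_fst_mem)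

theorem matchNumOn_union (hXY : Disjoint X Y) (hsep : ∀ u v, G.Adj u v → u ∈ X → v ∉ Y) :
    matchNumOn G (X ∪ Y) = matchNumOn G X + matchNumOn G Y := by
  apply le_antisymm
  · obtain ⟨M, hM, hcard⟩ := exists_mem_maxMatchingsOn G (X ∪ Y)
    obtain ⟨N₁, h₁, N₂, h₂, rfl⟩ := exists_eq_union_of_mem_matchingsOn_union hsep hM
    rw [← hcard, ncard_union_of_mem_matchingsOn hXY h₁ h₂]
    exact add_le_add (ncard_le_matchNumOn h₁) (ncard_le_matchNumOn h₂)
  · obtain ⟨N₁, h₁, hcard₁⟩ := exists_mem_maxMatchingsOn G X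
    obtain ⟨N₂, h₂, hcard₂⟩ := exists_mem_maxMatchingsOn G Y
    rw [← hcard₁, ← hcard₂, ← ncard_union_of_mem_matchingsOn hXY h₁ h₂]
    exact ncard_le_matchNumOn (union_mem_matchingsOn_union hXY h₁ h₂)

theorem maxMatchingsOn_union (hXY : Disjoint X Y)
    (hsep : ∀ u v, G.Adj u v → u ∈ X → v ∉ Y) :
    maxMatchingsOn G (X ∪ Y) =
      (fun p => p.1 ∪ p.2) '' (maxMatchingsOn G X ×ˢ maxMatchingsOn G Y) := by
  ext M
  constructor
  · rintro ⟨hM, hcard⟩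
    obtain ⟨N₁, h₁, N₂, h₂, rfl⟩ := exists_eq_union_of_mem_matchingsOn_union hsep hM
    rw [ncard_union_of_mem_matchingsOn hXY h₁ h₂, matchNumOn_union hXY hsep] at hcard
    have hle₁ := ncard_le_matchNumOn h₁
    have hle₂ := ncard_le_matchNumOn h₂
    exact ⟨(N₁, N₂),
      ⟨⟨h₁, show N₁.ncard = _ by omega⟩, h₂, show N₂.ncard = _ by omega⟩, rfl⟩
  · rintro ⟨⟨N₁, N₂⟩, ⟨⟨h₁, hcard₁⟩, h₂, hcard₂⟩, rfl⟩
    refine ⟨union_mem_matchingsOn_union hXY h₁ h₂, ?_⟩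
    rw [ncard_union_of_mem_matchingsOn hXY h₁ h₂, hcard₁, hcard₂, matchNumOn_union hXY hsep]

theorem ncard_maxMatchingsOn_union (hXY : Disjoint X Y)
    (hsep : ∀ u v, G.Adj u v → u ∈ X → v ∉ Y) :
    (maxMatchingsOn G (X ∪ Y)).ncard =
      (maxMatchingsOn G X).ncard * (maxMatchingsOn G Y).ncard := by
  rw [maxMatchingsOn_union hXY hsep, Set.InjOn.ncard_image, Set.ncard_prod]
  rintro ⟨N₁, N₂⟩ ⟨⟨h₁, -⟩, h₂, -⟩ ⟨N₁', N₂'⟩ ⟨⟨h₁', -⟩, h₂', -⟩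
    (heq : N₁ ∪ N₂ = N₁' ∪ N₂')
  refine Prod.ext ?_ ?_
  · rw [← sep_union_eq_left hXY h₁ h₂, heq, sep_union_eq_left hXY h₁' h₂']
  · rw [← sep_union_eq_right hXY h₁ h₂, heq, sep_union_eq_right hXY h₁' h₂']

end DisjointUnion

section Edge

variable {V : Type} {G : SimpleGraph V} {s t v : V} {e : Sym2 V} {M N : Set (Sym2 V)}

lemma mem_matchingsOn_compl_singleton (hM : IsMatchingSet G M) (hv : ¬Covers M v) :
    M ∈ matchingsOn G {v}ᶜ :=
  ⟨hM, fun f hf _ hu huv => hv ⟨f, hf, huv ▸ hu⟩⟩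

lemma IsMatchingSet.deleteEdges (hM : IsMatchingSet G M) {E : Set (Sym2 V)}
    (hE : Disjoint M E) : IsMatchingSet (G.deleteEdges E) M :=
  ⟨by rw [edgeSet_deleteEdges]; exact Set.subset_sdiff.2 ⟨hM.1, hE⟩, hM.2⟩

lemma IsMatchingSet.notMem_of_deleteEdges (hM : IsMatchingSet (G.deleteEdges {e}) M) :
    e ∉ M := fun he => by simpa using hM.1 he

lemma sdiff_mem_matchingsOn_compl (hM : IsMatchingSet G M) (he : s(s, t) ∈ M) :
    M \ {s(s, t)} ∈ matchingsOn (G.deleteEdges {s(s, t)}) {s, t}ᶜ :=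
  ⟨(hM.subset Set.sdiff_subset).deleteEdges Set.disjoint_sdiff_left,
    fun _ hf v hvf hv => hM.2 he hf.1 (Ne.symm hf.2) v ⟨Sym2.mem_iff.2 hv, hvf⟩⟩

lemma insert_isMatchingSet (hadj : G.Adj s t)
    (hN : N ∈ matchingsOn (G.deleteEdges {s(s, t)}) {s, t}ᶜ) :
    IsMatchingSet G (insert s(s, t) N) := by
  rw [Set.insert_eq]
  refine IsMatchingSet.union ⟨Set.singleton_subset_iff.2 hadj, Set.pairwise_singleton _ _⟩
    (hN.1.mono (deleteEdges_le _)) ?_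
  rintro _ rfl f hf v ⟨hv, hvf⟩
  exact hN.2 f hf v hvf (Sym2.mem_iff.1 hv)

variable [Finite V]

lemma matchNum_le_matchNumOn_compl_singleton (hM : M ∈ MaximumMatchings G)
    (hv : ¬Covers M v) (hve : v ∈ e) : matchNum G ≤ matchNumOn (G.deleteEdges {e}) {v}ᶜ := by
  have he : e ∉ M := fun he => hv ⟨e, he, hve⟩
  rw [← hM.2]
  exact ncard_le_matchNumOn
    (mem_matchingsOn_compl_singleton (hM.1.deleteEdges (Set.disjoint_singleton_right.2 he)) hv)

lemma matchNumOn_compl_add_one_le_matchNum (hadj : G.Adj s t) :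
    matchNumOn (G.deleteEdges {s(s, t)}) {s, t}ᶜ + 1 ≤ matchNum G := by
  obtain ⟨N, hN, hcard⟩ := exists_mem_maxMatchingsOn (G.deleteEdges {s(s, t)}) {s, t}ᶜ
  rw [← hcard, ← Set.ncard_insert_of_notMem hN.1.notMem_of_deleteEdges]
  exact (insert_isMatchingSet hadj hN).ncard_le_matchNum

theorem mm_eq_of_matchNum_eq (hadj : G.Adj s t)
    (h₁ : matchNumOn (G.deleteEdges {s(s, t)}) Set.univ = matchNum G)
    (h₂ : matchNumOn (G.deleteEdges {s(s, t)}) {s, t}ᶜ + 1 = matchNum G) :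
    mm G = (maxMatchingsOn (G.deleteEdges {s(s, t)}) Set.univ).ncard +
      (maxMatchingsOn (G.deleteEdges {s(s, t)}) {s, t}ᶜ).ncard := by
  set D := G.deleteEdges {s(s, t)}
  have hsplit : MaximumMatchings G =
      maxMatchingsOn D Set.univ ∪ insert s(s, t) '' maxMatchingsOn D {s, t}ᶜ := by
    ext M
    constructor
    · rintro ⟨hM, hcard⟩
      by_cases he : s(s, t) ∈ M
      · refine .inr ⟨M \ {s(s, t)}, ⟨sdiff_mem_matchingsOn_compl hM he, ?_⟩,
          Set.insert_sdiff_singleton.trans (Set.insert_eq_of_mem he)⟩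
        have := Set.ncard_sdiff_singleton_add_one he
        omega
      · exact .inl ⟨mem_matchingsOn_univ.2 (hM.deleteEdges (Set.disjoint_singleton_right.2 he)),
          by omega⟩
    · rintro (⟨hM, hcard⟩ | ⟨N, ⟨hN, hcard⟩, rfl⟩)
      · exact ⟨(mem_matchingsOn_univ.1 hM).mono (deleteEdges_le _), by omega⟩
      · refine ⟨insert_isMatchingSet hadj hN, ?_⟩
        rw [Set.ncard_insert_of_notMem hN.1.notMem_of_deleteEdges]
        omega
  have hinj : Set.InjOn (insert s(s, t)) (maxMatchingsOn D {s, t}ᶜ) := by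
    intro N₁ hN₁ N₂ hN₂ heq
    rw [← Set.insert_sdiff_self_of_notMem hN₁.1.1.notMem_of_deleteEdges, heq,
      Set.insert_sdiff_self_of_notMem hN₂.1.1.notMem_of_deleteEdges]
  have hdisj :
      Disjoint (maxMatchingsOn D Set.univ) (insert s(s, t) '' maxMatchingsOn D {s, t}ᶜ) :=
    Set.disjoint_left.2 fun _ hM ⟨_, _, hN⟩ =>
      (mem_matchingsOn_univ.1 hM.1).notMem_of_deleteEdges (hN ▸ Set.mem_insert _ _)
  rw [mm, hsplit, Set.ncard_union_eq hdisj, hinj.ncard_image]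

end Edge

section BridgeSide

variable {V : Type} {G : SimpleGraph V} {s t : V} {A : Set V}

lemma compl_singleton_of_mem (hs : s ∈ A) : ({s}ᶜ : Set V) = A \ {s} ∪ Aᶜ := by
  ext v
  by_cases hv : v = s <;> simp [hv, hs, em]

lemma compl_singleton_of_notMem (ht : t ∉ A) : ({t}ᶜ : Set V) = A ∪ Aᶜ \ {t} := by
  ext v
  by_cases hv : v = t <;> simp [hv, ht, em]

lemma compl_pair_of_mem_of_notMem (hs : s ∈ A) (ht : t ∉ A) :
    ({s, t}ᶜ : Set V) = A \ {s} ∪ Aᶜ \ {t} := by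
  ext v
  by_cases hvs : v = s <;> by_cases hvt : v = t <;> simp_all [em]

structure IsBridgeSide (G : SimpleGraph V) (s t : V) (A : Set V) : Prop where
  adj : G.Adj s t
  left_mem : s ∈ A
  right_notMem : t ∉ A
  mem_of_adj : ∀ ⦃u v⦄, (G.deleteEdges {s(s, t)}).Adj u v → u ∈ A → v ∈ A

namespace IsBridgeSide

variable [Finite V] {X Y : Set V}

lemma matchNumOn_union (h : IsBridgeSide G s t A) (hX : X ⊆ A) (hY : Y ⊆ Aᶜ) :
    matchNumOn (G.deleteEdges {s(s, t)}) (X ∪ Y) =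
      matchNumOn (G.deleteEdges {s(s, t)}) X + matchNumOn (G.deleteEdges {s(s, t)}) Y :=
  PaperMM.matchNumOn_union (Set.disjoint_of_subset hX hY disjoint_compl_right)
    fun _ _ huv hu hv => hY hv (h.mem_of_adj huv (hX hu))

lemma ncard_maxMatchingsOn_union (h : IsBridgeSide G s t A) (hX : X ⊆ A) (hY : Y ⊆ Aᶜ) :
    (maxMatchingsOn (G.deleteEdges {s(s, t)}) (X ∪ Y)).ncard =
      (maxMatchingsOn (G.deleteEdges {s(s, t)}) X).ncard *
        (maxMatchingsOn (G.deleteEdges {s(s, t)}) Y).ncard :=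
  PaperMM.ncard_maxMatchingsOn_union (Set.disjoint_of_subset hX hY disjoint_compl_right)
    fun _ _ huv hu hv => hY hv (h.mem_of_adj huv (hX hu))

theorem matchNum_eq_of_typeA (h : IsBridgeSide G s t A) (hs : TypeA G s) :
    matchNumOn (G.deleteEdges {s(s, t)}) (A \ {s}) = matchNumOn (G.deleteEdges {s(s, t)}) A ∧
    matchNumOn (G.deleteEdges {s(s, t)}) Aᶜ =
      matchNumOn (G.deleteEdges {s(s, t)}) (Aᶜ \ {t}) + 1 ∧
    matchNum G =
      matchNumOn (G.deleteEdges {s(s, t)}) A + matchNumOn (G.deleteEdges {s(s, t)}) Aᶜ := by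
  obtain ⟨M, hM, hsM⟩ := hs
  have hupper := matchNum_le_matchNumOn_compl_singleton hM hsM (Sym2.mem_mk_left s t)
  rw [compl_singleton_of_mem h.left_mem, h.matchNumOn_union Set.sdiff_subset le_rfl] at hupper
  have hlower := matchNumOn_le_matchNum (G.deleteEdges_le {s(s, t)}) Set.univ
  rw [← Set.union_compl_self A, h.matchNumOn_union le_rfl le_rfl] at hlower
  have hlowerEdge := matchNumOn_compl_add_one_le_matchNum h.adj
  rw [compl_pair_of_mem_of_notMem h.left_mem h.right_notMem,
    h.matchNumOn_union Set.sdiff_subset Set.sdiff_subset] at hlowerEdge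
  have hmono :=
    matchNumOn_mono (G := G.deleteEdges {s(s, t)}) (Set.sdiff_subset (s := A) (t := {s}))
  have hdrop := matchNumOn_le_matchNumOn_sdiff_singleton_add_one (G.deleteEdges {s(s, t)}) Aᶜ t
  omega

theorem typeB_of_typeA (h : IsBridgeSide G s t A) (hs : TypeA G s) : TypeB G t := by
  rintro ⟨M, hM, htM⟩
  have hupper := matchNum_le_matchNumOn_compl_singleton hM htM (Sym2.mem_mk_right s t)
  rw [compl_singleton_of_notMem h.right_notMem,
    h.matchNumOn_union le_rfl Set.sdiff_subset] at hupper
  have := h.matchNum_eq_of_typeA hs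
  omega

theorem mm_eq_of_typeA (h : IsBridgeSide G s t A) (hs : TypeA G s) :
    mm G = (maxMatchingsOn (G.deleteEdges {s(s, t)}) A).ncard *
        (maxMatchingsOn (G.deleteEdges {s(s, t)}) Aᶜ).ncard +
      (maxMatchingsOn (G.deleteEdges {s(s, t)}) (A \ {s})).ncard *
        (maxMatchingsOn (G.deleteEdges {s(s, t)}) (Aᶜ \ {t})).ncard := by
  obtain ⟨hμs, hμt, hμ⟩ := h.matchNum_eq_of_typeA hs
  have hcompl := compl_pair_of_mem_of_notMem h.left_mem h.right_notMem
  rw [mm_eq_of_matchNum_eq h.adj, ← Set.union_compl_self A, hcompl,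
    h.ncard_maxMatchingsOn_union le_rfl le_rfl,
    h.ncard_maxMatchingsOn_union Set.sdiff_subset Set.sdiff_subset]
  · rw [← Set.union_compl_self A, h.matchNumOn_union le_rfl le_rfl, hμ]
  · rw [hcompl, h.matchNumOn_union Set.sdiff_subset Set.sdiff_subset]
    omega

end IsBridgeSide

end BridgeSide

section Tree

variable {V : Type} {G : SimpleGraph V} {s t v : V}

lemma reachable_deleteEdges_left_or_right (h : G.Reachable s v) :
    (G.deleteEdges {s(s, t)}).Reachable s v ∨ (G.deleteEdges {s(s, t)}).Reachable t v := by
  rw [reachable_iff_reflTransGen] at h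
  induction h with
  | refl => exact .inl .rfl
  | @tail u w _ huw ih =>
    by_cases he : s(u, w) = s(s, t)
    · rcases Sym2.eq_iff.1 he with ⟨-, rfl⟩ | ⟨-, rfl⟩
      · exact .inr .rfl
      · exact .inl .rfl
    · have hD : (G.deleteEdges {s(s, t)}).Adj u w := (deleteEdges_adj ..).2 ⟨huw, he⟩
      exact ih.imp (·.trans hD.reachable) (·.trans hD.reachable)

lemma isBridgeSide_sideSet (htree : G.IsTree) (hadj : G.Adj s t) :
    IsBridgeSide G s t (sideSet G s t) where
  adj := hadj
  left_mem := mem_sideSet_self G s t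
  right_notMem := isBridge_iff.1 (isAcyclic_iff_forall_adj_isBridge.1 htree.isAcyclic hadj)
  mem_of_adj _ _ huv hu := hu.trans huv.reachable

lemma compl_sideSet (htree : G.IsTree) (hadj : G.Adj s t) :
    (sideSet G s t)ᶜ = sideSet G t s := by
  have hnot := (isBridgeSide_sideSet htree hadj).right_notMem
  ext v
  simp only [sideSet, Sym2.eq_swap (a := t), Set.mem_compl_iff, Set.mem_ofPred_eq]
  exact ⟨fun hv => (reachable_deleteEdges_left_or_right (htree.connected s v)).resolve_left hv,
    fun htv hsv => hnot (hsv.trans htv.symm)⟩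

end Tree

/-- for a tree `T`, a vertex `s` of type A and a neighbour `t` of `s`,
with `T_s`, `T_t` the components of `T − st` containing `s`, `t`: the vertex `t` is of
type B, `μ(T_s − s) = μ(T_s)`, `μ(T_t − t) = μ(T_t) − 1`, `μ(T) = μ(T_s) + μ(T_t)` and
`m(T) = m(T_s)m(T_t) + m(T_s − s)m(T_t − t)`. -/
theorem stmt_11 {V : Type} [Fintype V] (G : SimpleGraph V) (htree : G.IsTree)
    (s t : V) (hA : TypeA G s) (hadj : G.Adj s t) :
    TypeB G t ∧
    sideMuDel G s t = sideMu G s t ∧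
    sideMu G t s = sideMuDel G t s + 1 ∧
    matchNum G = sideMu G s t + sideMu G t s ∧
    mm G = sideM G s t * sideM G t s + sideMDel G s t * sideMDel G t s := by
  have hside := isBridgeSide_sideSet htree hadj
  have hswap : G.deleteEdges {s(t, s)} = G.deleteEdges {s(s, t)} := by rw [Sym2.eq_swap]
  simp only [sideMu, sideMuDel, sideM, sideMDel, sideGraph, hswap, ← compl_sideSet htree hadj,
    matchNum_induce, mm_induce]
  obtain ⟨hμs, hμt, hμ⟩ := hside.matchNum_eq_of_typeA hA
  exact ⟨hside.typeB_of_typeA hA, hμs, hμt, hμ, hside.mm_eq_of_typeA hA⟩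

end PaperMM
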